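/- For every finite nonempty simple graph G: R(K4,G) + R(A4,G) = (1 + r̂(K4,G) + 3·r̂(M4,G) + 3·r̂(C4,G) + 12·r̂(Q4,G) + 12·r̂(V4,G)) / 32, where for each isomorphism type the Fourier coefficient r̂ is evaluated at any fixed labeled representative of that type (it does not depend on the choice of labeling). -/

import Mathlib

open Filter Topology SimpleGraph

namespace IndPaper

/-- The pullback of `G : SimpleGraph V` along a map `f : Fin t → V`:
distinct `i, j` are adjacent iff `f i` and `f j` are adjacent in `G`. -/
def pull {V : Type*} {t : ℕ} (G : SimpleGraph V) (f : Fin t → V) : SimpleGraph (Fin t) where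
  Adj i j := G.Adj (f i) (f j)
  symm := ⟨fun i j h => G.symm.1 _ _ h⟩
  loopless := ⟨fun i h => G.loopless.1 _ h⟩

/-- `r(H,G)`: the labeled density with repetitions of the labeled graph `H` in `G`. -/
noncomputable def labDensity {V : Type*} [Fintype V] {t : ℕ}
    (H : SimpleGraph (Fin t)) (G : SimpleGraph V) : ℝ :=
  (Nat.card {f : Fin t → V // pull G f = H} : ℝ) / (Fintype.card V : ℝ) ^ t

/-- `R(H,G)`: the density with repetitions of the isomorphism type of `H` in `G`. -/
noncomputable def repDensity {V : Type*} [Fintype V] {t : ℕ}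
    (H : SimpleGraph (Fin t)) (G : SimpleGraph V) : ℝ :=
  (Nat.card {f : Fin t → V // Nonempty (pull G f ≃g H)} : ℝ) / (Fintype.card V : ℝ) ^ t

/-- `p(H,G)`: the labeled density without repetitions (injective samples). -/
noncomputable def injDensity {V : Type*} [Fintype V] {t : ℕ}
    (H : SimpleGraph (Fin t)) (G : SimpleGraph V) : ℝ :=
  (Nat.card {f : Fin t → V // Function.Injective f ∧ pull G f = H} : ℝ) /
    ((Fintype.card V).descFactorial t : ℝ)

/-- `P(H,G)`: the number of `t`-subsets of `V(G)` inducing a copy of `H`, over `C(n,t)`. -/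
noncomputable def subsetDensity {V : Type*} [Fintype V] {t : ℕ}
    (H : SimpleGraph (Fin t)) (G : SimpleGraph V) : ℝ :=
  (Nat.card {s : Finset V // s.card = t ∧ Nonempty (G.induce (↑s : Set V) ≃g H)} : ℝ) /
    ((Fintype.card V).choose t : ℝ)

/-- `max_{|G|=n} P(H,G)`. -/
noncomputable def maxDensity {t : ℕ} (H : SimpleGraph (Fin t)) (n : ℕ) : ℝ :=
  sSup {x : ℝ | ∃ G : SimpleGraph (Fin n), x = subsetDensity H G}

/-- `min_{|G|=n} P(H,G)`. -/
noncomputable def minDensity {t : ℕ} (H : SimpleGraph (Fin t)) (n : ℕ) : ℝ :=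
  sInf {x : ℝ | ∃ G : SimpleGraph (Fin n), x = subsetDensity H G}

/-- The inducibility `I(H) = lim_n max_{|G|=n} P(H,G)` (the sequence of maxima is
eventually non-increasing, hence the limit exists and equals the `limsup`). -/
noncomputable def inducibility {t : ℕ} (H : SimpleGraph (Fin t)) : ℝ :=
  Filter.limsup (fun n => maxDensity H n) Filter.atTop

/-- The minimal inducibility `i(H) = lim_n min_{|G|=n} P(H,G)` (the sequence of minima is
eventually non-decreasing, hence the limit exists and equals the `liminf`). -/
noncomputable def minInducibility {t : ℕ} (H : SimpleGraph (Fin t)) : ℝ :=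
  Filter.liminf (fun n => minDensity H n) Filter.atTop

/-- The spectral profile: discrete Fourier transform of the labeled profile over the group
of labeled `t`-vertex graphs under symmetric difference of edge sets. -/
noncomputable def spectral {V : Type*} [Fintype V] {t : ℕ}
    (H : SimpleGraph (Fin t)) (G : SimpleGraph V) : ℝ :=
  ∑ H' : SimpleGraph (Fin t),
    (-1 : ℝ) ^ (Nat.card (H ⊓ H').edgeSet) * labDensity H' G

/-- The tensor product `G ⊗ G'`. -/
def tensor {V W : Type*} (G : SimpleGraph V) (G' : SimpleGraph W) : SimpleGraph (V × W) where
  Adj x y := Xor' (G.Adj x.1 y.1) (G'.Adj x.2 y.2)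
  symm := ⟨fun x y h => by
    rcases h with ⟨h1, h2⟩ | ⟨h1, h2⟩
    · exact Or.inl ⟨h1.symm, fun hc => h2 hc.symm⟩
    · exact Or.inr ⟨h1.symm, fun hc => h2 hc.symm⟩⟩
  loopless := ⟨fun x h => by
    rcases h with ⟨h1, _⟩ | ⟨h1, _⟩
    · exact G.loopless.1 _ h1
    · exact G'.loopless.1 _ h1⟩

/-- The composition (lexicographic product) `G ⊙ G'`. -/
def comp {V W : Type*} (G : SimpleGraph V) (G' : SimpleGraph W) : SimpleGraph (V × W) where
  Adj x y := G.Adj x.1 y.1 ∨ (x.1 = y.1 ∧ G'.Adj x.2 y.2)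
  symm := ⟨fun x y h => by
    rcases h with h | ⟨h1, h2⟩
    · exact Or.inl h.symm
    · exact Or.inr ⟨h1.symm, h2.symm⟩⟩
  loopless := ⟨fun x h => by
    rcases h with h | ⟨_, h2⟩
    · exact G.loopless.1 _ h
    · exact G'.loopless.1 _ h2⟩

/-- The blow-up of `G` of order `m`. -/
def blowUp {V : Type*} (G : SimpleGraph V) (m : ℕ) : SimpleGraph (V × Fin m) where
  Adj x y := G.Adj x.1 y.1
  symm := ⟨fun _ _ h => G.symm.1 _ _ h⟩
  loopless := ⟨fun _ h => G.loopless.1 _ h⟩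

/-- Vertex type of the `n`-fold iterated composition. -/
def iterVert (V : Type) : ℕ → Type
  | 0 => PUnit
  | n + 1 => V × iterVert V n

instance iterVertFintype (V : Type) [Fintype V] : (n : ℕ) → Fintype (iterVert V n)
  | 0 => inferInstanceAs (Fintype PUnit)
  | n + 1 => letI := iterVertFintype V n; inferInstanceAs (Fintype (V × iterVert V n))

/-- The `n`-fold iterated composition `G^{⊙n}` (`n = 0` gives a single vertex). -/
def nestedPow {V : Type} (G : SimpleGraph V) : (n : ℕ) → SimpleGraph (iterVert V n)
  | 0 => (⊥ : SimpleGraph PUnit)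
  | n + 1 => comp G (nestedPow G n)

/- Fixed labeled representatives of the 4-vertex isomorphism types. -/
def K3 : SimpleGraph (Fin 3) := ⊤
def K4 : SimpleGraph (Fin 4) := ⊤
def A4 : SimpleGraph (Fin 4) := ⊥
def P4 : SimpleGraph (Fin 4) := SimpleGraph.pathGraph 4
def C4 : SimpleGraph (Fin 4) := SimpleGraph.cycleGraph 4
def M4 : SimpleGraph (Fin 4) :=
  SimpleGraph.fromRel (fun i j => (i = 0 ∧ j = 1) ∨ (i = 2 ∧ j = 3))
def V4 : SimpleGraph (Fin 4) :=
  SimpleGraph.fromRel (fun i j => (i = 0 ∧ j = 1) ∨ (i = 0 ∧ j = 2))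
def Q4 : SimpleGraph (Fin 4) :=
  SimpleGraph.fromRel (fun i j =>
    (i = 0 ∧ j = 1) ∨ (i = 0 ∧ j = 2) ∨ (i = 1 ∧ j = 2) ∨ (i = 0 ∧ j = 3))
def T4 : SimpleGraph (Fin 4) :=
  SimpleGraph.fromRel (fun i j => (i = 0 ∧ j = 1) ∨ (i = 0 ∧ j = 2) ∨ (i = 1 ∧ j = 2))
def S4 : SimpleGraph (Fin 4) :=
  SimpleGraph.fromRel (fun i j => i = 0 ∧ (j = 1 ∨ j = 2 ∨ j = 3))
def D4 : SimpleGraph (Fin 4) :=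
  SimpleGraph.fromRel (fun i j =>
    (i = 0 ∧ j = 1) ∨ (i = 0 ∧ j = 2) ∨ (i = 0 ∧ j = 3) ∨ (i = 1 ∧ j = 2) ∨ (i = 1 ∧ j = 3))
def E4 : SimpleGraph (Fin 4) :=
  SimpleGraph.fromRel (fun i j => i = 0 ∧ j = 1)

end IndPaper

/-!
The labeled graphs on four vertices with an even number of edges are the labelings of `A4`,
`K4`, `M4`, `C4`, `Q4` and `V4`, with `1, 1, 3, 3, 12, 12` labelings respectively. Summing the
characters `H ↦ (-1) ^ |E(X) ∩ E(H)|` of all of them gives `32` at `H = ⊤` and `H = ⊥` and `0`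
elsewhere (Fourier inversion on `(ℤ/2)^6`), so the right-hand side is `r(⊤,G) + r(⊥,G)`, and
`⊤`, `⊥` are the only labelings of their types.
Since relabeling does not change labeled densities, the sum over labelings can be replaced by
an average over the `24` relabelings of the representatives; the resulting identity between
characters is checked by evaluation on all `64` graphs.
-/

namespace IndPaper

open SimpleGraph Finset

section EdgeCount

variable {W : Type*} [Fintype W] [LinearOrder W] (X : SimpleGraph W) [DecidableRel X.Adj]

lemma card_edgeSet_eq_card_lt_adj :
    Nat.card X.edgeSet = #{p : W × W | p.1 < p.2 ∧ X.Adj p.1 p.2} := by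
  rw [Nat.card_eq_fintype_card, ← edgeFinset_card]
  symm
  refine card_nbij (fun p => s(p.1, p.2)) ?_ ?_ ?_
  · rintro ⟨i, j⟩ h
    simp_all
  · rintro ⟨i, j⟩ h ⟨k, l⟩ h' he
    simp only [coe_filter, mem_univ, true_and] at h h'
    rcases Sym2.eq_iff.mp he with ⟨rfl, rfl⟩ | ⟨rfl, rfl⟩
    · rfl
    · exact absurd (h.1.trans h'.1) (lt_irrefl _)
  · intro e he
    induction e using Sym2.ind with
    | _ i j =>
    have hij : X.Adj i j := by simpa using he
    rcases lt_or_gt_of_ne hij.ne with h | h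
    · exact ⟨(i, j), by simp [h, hij], rfl⟩
    · exact ⟨(j, i), by simp [h, hij.symm], Sym2.eq_swap⟩

lemma neg_one_pow_card_edgeSet :
    (-1 : ℤ) ^ Nat.card X.edgeSet = ∏ i, ∏ j, if i < j ∧ X.Adj i j then -1 else 1 := by
  rw [card_edgeSet_eq_card_lt_adj, ← prod_const, prod_filter, Fintype.prod_prod_type]

end EdgeCount

section Density

variable {V : Type*} [Fintype V] {t : ℕ}

lemma labDensity_comap (σ : Equiv.Perm (Fin t)) (H : SimpleGraph (Fin t)) (G : SimpleGraph V) :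
    labDensity (H.comap σ) G = labDensity H G := by
  unfold labDensity
  congr 2
  exact Nat.card_congr <| Equiv.subtypeEquiv (σ.arrowCongr (Equiv.refl V)) fun f =>
    σ.simpleGraph.eq_symm_apply

lemma sum_comap_mul_labDensity (f : SimpleGraph (Fin t) → ℝ) (σ : Equiv.Perm (Fin t))
    (G : SimpleGraph V) :
    ∑ H, f (H.comap σ) * labDensity H G = ∑ H, f H * labDensity H G :=
  Fintype.sum_equiv σ.symm.simpleGraph _ _ fun H => by
    simp [labDensity_comap]

lemma sum_labDensity [Nonempty V] (G : SimpleGraph V) :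
    ∑ H : SimpleGraph (Fin t), labDensity H G = 1 := by
  have hcard : ∑ H, (Nat.card {f : Fin t → V // pull G f = H} : ℝ) = Fintype.card V ^ t := by
    rw [← Nat.cast_sum, ← Nat.card_sigma, Nat.card_congr (Equiv.sigmaFiberEquiv (pull G))]
    simp
  simp_rw [labDensity, ← sum_div, hcard]
  exact div_self (by positivity)

lemma nonempty_iso_top_iff {W : Type*} (H : SimpleGraph W) :
    Nonempty (H ≃g (⊤ : SimpleGraph W)) ↔ H = ⊤ := by
  refine ⟨fun ⟨e⟩ => ?_, fun h => h ▸ ⟨Iso.refl⟩⟩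
  ext i j
  rw [← e.map_adj_iff, top_adj, top_adj, e.injective.ne_iff]

lemma nonempty_iso_bot_iff {W : Type*} (H : SimpleGraph W) :
    Nonempty (H ≃g (⊥ : SimpleGraph W)) ↔ H = ⊥ := by
  refine ⟨fun ⟨e⟩ => ?_, fun h => h ▸ ⟨Iso.refl⟩⟩
  ext i j
  rw [← e.map_adj_iff, bot_adj, bot_adj]

lemma repDensity_top (G : SimpleGraph V) :
    repDensity (⊤ : SimpleGraph (Fin t)) G = labDensity (⊤ : SimpleGraph (Fin t)) G := by
  simp only [repDensity, labDensity, nonempty_iso_top_iff]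

lemma repDensity_bot (G : SimpleGraph V) :
    repDensity (⊥ : SimpleGraph (Fin t)) G = labDensity (⊥ : SimpleGraph (Fin t)) G := by
  simp only [repDensity, labDensity, nonempty_iso_bot_iff]

end Density

section Characters

variable {t : ℕ}

noncomputable def fourierChar (X H : SimpleGraph (Fin t)) : ℝ :=
  (-1) ^ Nat.card (X ⊓ H).edgeSet

lemma spectral_eq_sum_fourierChar {V : Type*} [Fintype V] (X : SimpleGraph (Fin t))
    (G : SimpleGraph V) : spectral X G = ∑ H, fourierChar X H * labDensity H G :=
  rfl

def edgeSign (X : SimpleGraph (Fin t)) [DecidableRel X.Adj] (a : Fin t → Fin t → Bool) : ℤ :=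
  ∏ i, ∏ j, if i < j ∧ X.Adj i j ∧ a i j then -1 else 1

lemma fourierChar_eq_edgeSign (X H : SimpleGraph (Fin t)) [DecidableRel X.Adj]
    [DecidableRel H.Adj] : fourierChar X H = edgeSign X fun i j => H.Adj i j := by
  simpa [fourierChar, edgeSign] using
    congrArg (Int.cast : ℤ → ℝ) (neg_one_pow_card_edgeSet (X ⊓ H))

end Characters

section FourVertices

instance : DecidableRel K4.Adj := inferInstanceAs (DecidableRel (⊤ : SimpleGraph (Fin 4)).Adj)
instance : DecidableRel M4.Adj := by unfold M4; infer_instance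
instance : DecidableRel C4.Adj := inferInstanceAs (DecidableRel (cycleGraph 4).Adj)
instance : DecidableRel Q4.Adj := by unfold Q4; infer_instance
instance : DecidableRel V4.Adj := by unfold V4; infer_instance

/-- The coefficient of each representative `R` is the number of labelings of its type, so that
`∑ σ, fourierWeight (H.comap σ)` is `24` times the sum of the characters of all labeled graphs
with an even number of edges. -/
noncomputable def fourierWeight (H : SimpleGraph (Fin 4)) : ℝ :=
  1 + fourierChar K4 H + 3 * fourierChar M4 H + 3 * fourierChar C4 H + 12 * fourierChar Q4 H
    + 12 * fourierChar V4 H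

def bitWeight (a : Fin 4 → Fin 4 → Bool) : ℤ :=
  1 + edgeSign K4 a + 3 * edgeSign M4 a + 3 * edgeSign C4 a + 12 * edgeSign Q4 a
    + 12 * edgeSign V4 a

lemma fourierWeight_eq_bitWeight (H : SimpleGraph (Fin 4)) [DecidableRel H.Adj] :
    fourierWeight H = bitWeight fun i j => H.Adj i j := by
  simp only [fourierWeight, bitWeight, fourierChar_eq_edgeSign]
  push_cast
  rfl

def adjOfBits (p q r s t u : Bool) : Fin 4 → Fin 4 → Bool :=
  ![![false, p, q, r], ![p, false, s, t], ![q, s, false, u], ![r, t, u, false]]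

lemma adjOfBits_eq_decide_adj (H : SimpleGraph (Fin 4)) [DecidableRel H.Adj] :
    adjOfBits (H.Adj 0 1) (H.Adj 0 2) (H.Adj 0 3) (H.Adj 1 2) (H.Adj 1 3) (H.Adj 2 3) =
      fun i j => decide (H.Adj i j) := by
  funext i j
  fin_cases i <;> fin_cases j <;> simp [adjOfBits] <;> exact H.adj_comm _ _

lemma sum_perm_bitWeight_adjOfBits : ∀ p q r s t u : Bool,
    ∑ σ : Equiv.Perm (Fin 4), bitWeight (fun i j => adjOfBits p q r s t u (σ i) (σ j)) =
      (if ∀ i j, i ≠ j → adjOfBits p q r s t u i j then 768 else 0)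
        + if ∀ i j, adjOfBits p q r s t u i j = false then 768 else 0 := by
  simp only [bitWeight, edgeSign, Fin.prod_univ_four]
  decide +kernel

open Classical in
lemma sum_perm_fourierWeight_comap (H : SimpleGraph (Fin 4)) :
    ∑ σ : Equiv.Perm (Fin 4), fourierWeight (H.comap σ) =
      (if H = ⊤ then 768 else 0) + if H = ⊥ then 768 else 0 := by
  have h := sum_perm_bitWeight_adjOfBits (H.Adj 0 1) (H.Adj 0 2) (H.Adj 0 3) (H.Adj 1 2)
    (H.Adj 1 3) (H.Adj 2 3)
  rw [adjOfBits_eq_decide_adj] at h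
  have htop : H = ⊤ ↔ ∀ i j, i ≠ j → H.Adj i j :=
    eq_top_iff.trans ⟨fun h i j => @h i j, fun h i j => h i j⟩
  have hbot : H = ⊥ ↔ ∀ i j, ¬ H.Adj i j :=
    eq_bot_iff.trans ⟨fun h i j => @h i j, fun h i j => h i j⟩
  simp only [fourierWeight_eq_bitWeight, comap_adj]
  simpa [htop, hbot] using congrArg (Int.cast : ℤ → ℝ) h

lemma sum_fourierWeight_mul_labDensity {V : Type*} [Fintype V] [Nonempty V]
    (G : SimpleGraph V) :
    ∑ H, fourierWeight H * labDensity H G =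
      1 + spectral K4 G + 3 * spectral M4 G + 3 * spectral C4 G + 12 * spectral Q4 G
        + 12 * spectral V4 G := by
  simp only [fourierWeight, spectral_eq_sum_fourierChar, add_mul, mul_assoc, sum_add_distrib,
    ← mul_sum, one_mul, sum_labDensity]

end FourVertices

end IndPaper

open IndPaper Finset in
/-- The inverse-Fourier formula for the density of monochromatic `K4`:
`R(K4,G) + R(A4,G) = (1 + r̂(K4,G) + 3r̂(M4,G) + 3r̂(C4,G) + 12r̂(Q4,G) + 12r̂(V4,G))/32`. -/
theorem repDensity_K4_add_A4_eq_spectral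
    {V : Type} [Fintype V] [Nonempty V] (G : SimpleGraph V) :
    repDensity K4 G + repDensity A4 G =
      (1 + spectral K4 G + 3 * spectral M4 G + 3 * spectral C4 G
        + 12 * spectral Q4 G + 12 * spectral V4 G) / 32 := by
  classical
  have key : (24 : ℝ) * (1 + spectral K4 G + 3 * spectral M4 G + 3 * spectral C4 G
      + 12 * spectral Q4 G + 12 * spectral V4 G) = 768 * (repDensity K4 G + repDensity A4 G) :=
    calc _ = ∑ σ : Equiv.Perm (Fin 4), ∑ H, fourierWeight (H.comap σ) * labDensity H G := by
          simp only [sum_comap_mul_labDensity, sum_fourierWeight_mul_labDensity, sum_const,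
            card_univ, Fintype.card_perm, Fintype.card_fin, nsmul_eq_mul]
          norm_num [Nat.factorial]
      _ = ∑ H : SimpleGraph (Fin 4),
            ((if H = ⊤ then 768 else 0) + if H = ⊥ then 768 else 0) * labDensity H G := by
          simp only [sum_comm (γ := Equiv.Perm (Fin 4)), ← sum_mul, sum_perm_fourierWeight_comap]
      _ = 768 * (repDensity K4 G + repDensity A4 G) := by
          simp only [add_mul, sum_add_distrib, ite_mul, zero_mul, sum_ite_eq', mem_univ, if_true,
            ← mul_add]
          rw [K4, A4, repDensity_top, repDensity_bot]
  linarith
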